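/- arXiv:1505.00064 — 2 statements merged into one kernel-verified Lean document; each statement's English description precedes it below -/
import Mathlib

section
/- Let X be a topological vector space over ℂ, T a continuous linear operator on X, and r ≥ 1 an integer. Then T is a Δ*-operator if and only if the direct sum operator T ⊕ T² ⊕ … ⊕ T^r on X^r, defined by (x₁, …, x_r) ↦ (T x₁, T² x₂, …, T^r x_r), is a Δ*-operator on X^r (with the product topology). -/
open Filter Set

/-- `A ⊆ ℕ` is a Δ set: it contains all the positive differences of some infinite set. -/
def DeltaSet (A : Set ℕ) : Prop :=
  ∃ B : Set ℕ, B.Infinite ∧ ∀ a ∈ B, ∀ b ∈ B, a < b → b - a ∈ A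

/-- `A ⊆ ℕ` is a Δ* set: it meets every Δ set. -/
def DeltaStarSet (A : Set ℕ) : Prop :=
  ∀ B : Set ℕ, DeltaSet B → (A ∩ B).Nonempty

/-- `S` is a Δ*-operator: every return set `N(U,V)` between nonempty open sets is
a Δ* set. -/
def DeltaStarOperator {Y : Type*} [AddCommGroup Y] [Module ℂ Y] [TopologicalSpace Y]
    [IsTopologicalAddGroup Y] [ContinuousSMul ℂ Y] (S : Y →L[ℂ] Y) : Prop :=
  ∀ U V : Set Y, IsOpen U → IsOpen V → U.Nonempty → V.Nonempty →
    DeltaStarSet {n : ℕ | ((S ^ n) '' U ∩ V).Nonempty}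

/-- The direct sum operator `T ⊕ T² ⊕ ⋯ ⊕ T^r` on `X^r`,
`(x₁, …, x_r) ↦ (T x₁, T² x₂, …, T^r x_r)`. -/
noncomputable def directSumPowers {X : Type*} [AddCommGroup X] [Module ℂ X]
    [TopologicalSpace X] [IsTopologicalAddGroup X] [ContinuousSMul ℂ X]
    (T : X →L[ℂ] X) (r : ℕ) : (Fin r → X) →L[ℂ] (Fin r → X) :=
  ContinuousLinearMap.pi (fun i => (T ^ ((i : ℕ) + 1)).comp (ContinuousLinearMap.proj i))



lemma deltaStar_mono {A A' : Set ℕ} (h : A ⊆ A') (hA : DeltaStarSet A) :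
    DeltaStarSet A' := fun B hB => ((hA B hB).imp fun n hn => ⟨h hn.1, hn.2⟩)

lemma deltaStar_univ : DeltaStarSet (Set.univ) := by
  rintro B ⟨C, hC, hdiff⟩
  obtain ⟨a, ha⟩ := hC.nonempty
  obtain ⟨b, hb, hab⟩ := hC.exists_gt a
  exact ⟨b - a, trivial, hdiff a ha b hb hab⟩

/- ### infinite Ramsey for pairs, 2 colors -/

lemma infinite_of_union {S : Set ℕ} (hS : S.Infinite) (p : ℕ → Bool) :
    {x ∈ S | p x = true}.Infinite ∨ {x ∈ S | p x = false}.Infinite := by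
  by_contra h
  push_neg at h
  apply hS
  have : S ⊆ {x ∈ S | p x = true} ∪ {x ∈ S | p x = false} := by
    intro x hx
    rcases Bool.eq_false_or_eq_true (p x) with h' | h'
    · exact Or.inl ⟨hx, h'⟩
    · exact Or.inr ⟨hx, h'⟩
  exact (h.1.union h.2).subset this

lemma step_ex (c : ℕ → ℕ → Bool) (S : Set ℕ) (hS : S.Infinite) :
    ∃ T : Set ℕ, T.Infinite ∧ T ⊆ S ∧ (∀ x ∈ T, sInf S < x) ∧
      ∀ x ∈ T, ∀ y ∈ T, c (sInf S) x = c (sInf S) y := by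
  set a := sInf S with ha
  have hS' : {x ∈ S | a < x}.Infinite := by
    have : {x ∈ S | a < x} = S \ {x | x ≤ a} := by
      ext x
      simp only [Set.mem_sep_iff, Set.mem_diff, Set.mem_setOf_eq, not_le]
    rw [this]
    exact hS.diff (Set.finite_Iic a)
  rcases infinite_of_union hS' (fun x => c a x) with h | h
  · refine ⟨_, h, fun x hx => hx.1.1, fun x hx => hx.1.2, fun x hx y hy => ?_⟩
    rw [hx.2, hy.2]
  · refine ⟨_, h, fun x hx => hx.1.1, fun x hx => hx.1.2, fun x hx y hy => ?_⟩
    rw [hx.2, hy.2]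

noncomputable def ramseySeq (c : ℕ → ℕ → Bool) (B : {S : Set ℕ // S.Infinite}) :
    ℕ → {S : Set ℕ // S.Infinite}
  | 0 => B
  | n + 1 =>
    ⟨(step_ex c (ramseySeq c B n).1 (ramseySeq c B n).2).choose,
      (step_ex c (ramseySeq c B n).1 (ramseySeq c B n).2).choose_spec.1⟩

lemma ramseySeq_spec (c : ℕ → ℕ → Bool) (B : {S : Set ℕ // S.Infinite}) (n : ℕ) :
    (ramseySeq c B (n+1)).1 ⊆ (ramseySeq c B n).1 ∧
    (∀ x ∈ (ramseySeq c B (n+1)).1, sInf (ramseySeq c B n).1 < x) ∧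
    ∀ x ∈ (ramseySeq c B (n+1)).1, ∀ y ∈ (ramseySeq c B (n+1)).1,
      c (sInf (ramseySeq c B n).1) x = c (sInf (ramseySeq c B n).1) y :=
  (step_ex c (ramseySeq c B n).1 (ramseySeq c B n).2).choose_spec.2

/-- Infinite Ramsey theorem for pairs with two colours, inside a given infinite set. -/
lemma ramsey_pairs (c : ℕ → ℕ → Bool) (B : Set ℕ) (hB : B.Infinite) :
    ∃ B' : Set ℕ, B' ⊆ B ∧ B'.Infinite ∧ ∃ ε : Bool,
      ∀ a ∈ B', ∀ b ∈ B', a < b → c a b = ε := by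
  set s : ℕ → Set ℕ := fun n => (ramseySeq c ⟨B, hB⟩ n).1 with hs
  have hinf : ∀ n, (s n).Infinite := fun n => (ramseySeq c ⟨B, hB⟩ n).2
  set a : ℕ → ℕ := fun n => sInf (s n) with haa
  have hmem : ∀ n, a n ∈ s n := fun n => Nat.sInf_mem (hinf n).nonempty
  have hsub : ∀ n, s (n+1) ⊆ s n := fun n => (ramseySeq_spec c ⟨B, hB⟩ n).1
  have hchain : ∀ m n, m ≤ n → s n ⊆ s m := by
    intro m n h
    induction n with
    | zero => rw [Nat.le_zero.mp h]
    | succ k ih =>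
      rcases Nat.lt_or_ge m (k+1) with h' | h'
      · exact (ih (Nat.lt_succ_iff.mp h')).trans' (hsub k)
      · rw [Nat.le_antisymm h h']
  have hsubB : ∀ n, s n ⊆ B := fun n => hchain 0 n (Nat.zero_le n)
  have hlt : ∀ m n, m < n → a n ∈ s (m+1) ∧ a m < a n := by
    intro m n h
    have h1 : a n ∈ s (m+1) := hchain (m+1) n h (hmem n)
    exact ⟨h1, (ramseySeq_spec c ⟨B, hB⟩ m).2.1 _ h1⟩
  have hcol : ∀ m n, m < n → c (a m) (a n) = c (a m) (a (m+1)) := by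
    intro m n h
    exact (ramseySeq_spec c ⟨B, hB⟩ m).2.2 _ (hlt m n h).1 _ (hlt m (m+1) m.lt_succ_self).1
  have hamono : StrictMono a := strictMono_nat_of_lt_succ fun n => (hlt n (n+1) n.lt_succ_self).2
  -- pigeonhole on the colour sequence
  rcases infinite_of_union Set.infinite_univ (fun m => c (a m) (a (m+1))) with h | h
  · refine ⟨a '' {m | c (a m) (a (m+1)) = true}, ?_, ?_, true, ?_⟩
    · rintro _ ⟨m, _, rfl⟩; exact hsubB m (hmem m)
    · exact (h.mono (by intro x hx; exact hx.2)).image (hamono.injective.injOn)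
    · rintro _ ⟨m, hm, rfl⟩ _ ⟨n, hn, rfl⟩ hab
      have : m < n := hamono.lt_iff_lt.mp hab
      rw [hcol m n this, hm]
  · refine ⟨a '' {m | c (a m) (a (m+1)) = false}, ?_, ?_, false, ?_⟩
    · rintro _ ⟨m, _, rfl⟩; exact hsubB m (hmem m)
    · exact (h.mono (by intro x hx; exact hx.2)).image (hamono.injective.injOn)
    · rintro _ ⟨m, hm, rfl⟩ _ ⟨n, hn, rfl⟩ hab
      have : m < n := hamono.lt_iff_lt.mp hab
      rw [hcol m n this, hm]

/- ### Δ* sets form a filter -/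

lemma deltaStar_shrink {A : Set ℕ} (hA : DeltaStarSet A) {B : Set ℕ} (hB : B.Infinite) :
    ∃ B' : Set ℕ, B' ⊆ B ∧ B'.Infinite ∧ ∀ a ∈ B', ∀ b ∈ B', a < b → b - a ∈ A := by
  classical
  obtain ⟨B', hB'B, hB'inf, ε, hε⟩ := ramsey_pairs (fun a b => decide (b - a ∈ A)) B hB
  cases ε with
  | true =>
    exact ⟨B', hB'B, hB'inf, fun x hx y hy h => of_decide_eq_true (hε x hx y hy h)⟩
  | false =>
    exfalso
    obtain ⟨n, hnA, d, hd1, d', hd2, hdd, rfl⟩ :=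
      hA {n | ∃ x ∈ B', ∃ y ∈ B', x < y ∧ n = y - x}
        ⟨B', hB'inf, fun x hx y hy h => ⟨x, hx, y, hy, h, rfl⟩⟩
    exact absurd (hε d hd1 d' hd2 hdd) (by simp [hnA])

lemma deltaStar_inter {A A' : Set ℕ} (hA : DeltaStarSet A) (hA' : DeltaStarSet A') :
    DeltaStarSet (A ∩ A') := by
  rintro C ⟨B, hBinf, hBdiff⟩
  obtain ⟨B1, hB1B, hB1inf, hB1⟩ := deltaStar_shrink hA hBinf
  obtain ⟨B2, hB2B, hB2inf, hB2⟩ := deltaStar_shrink hA' hB1inf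
  obtain ⟨x, hx⟩ := hB2inf.nonempty
  obtain ⟨y, hy, hxy⟩ := hB2inf.exists_gt x
  exact ⟨y - x, ⟨hB1 x (hB2B hx) y (hB2B hy) hxy, hB2 x hx y hy hxy⟩,
    hBdiff x (hB1B (hB2B hx)) y (hB1B (hB2B hy)) hxy⟩

lemma deltaStar_iInter_fin {r : ℕ} (f : Fin r → Set ℕ) (hf : ∀ i, DeltaStarSet (f i)) :
    DeltaStarSet (⋂ i, f i) := by
  induction r with
  | zero => simpa using deltaStar_univ
  | succ k ih =>
    have h1 : DeltaStarSet (⋂ i : Fin k, f i.succ) := ih _ (fun i => hf i.succ)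
    have h2 := deltaStar_inter (hf 0) h1
    apply deltaStar_mono _ h2
    intro n hn
    simp only [Set.mem_iInter, Set.mem_inter_iff] at hn ⊢
    intro i
    rcases Fin.eq_zero_or_eq_succ i with rfl | ⟨j, rfl⟩
    · exact hn.1
    · exact hn.2 j

lemma deltaStar_dilate {A : Set ℕ} (hA : DeltaStarSet A) {k : ℕ} (hk : 1 ≤ k) :
    DeltaStarSet {n | k * n ∈ A} := by
  rintro C ⟨B, hBinf, hBdiff⟩
  have hkey : DeltaSet {m | ∃ x ∈ B, ∃ y ∈ B, x < y ∧ m = k * (y - x)} := by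
    refine ⟨(k * ·) '' B, hBinf.image ?_, ?_⟩
    · intro x _ y _ h
      exact Nat.eq_of_mul_eq_mul_left hk h
    · rintro _ ⟨x, hx, rfl⟩ _ ⟨y, hy, rfl⟩ h
      have hxy : x < y := lt_of_mul_lt_mul_left h (Nat.zero_le k)
      exact ⟨x, hx, y, hy, hxy, (Nat.mul_sub k y x).symm⟩
  obtain ⟨m, hmA, x, hx, y, hy, hxy, rfl⟩ := hA _ hkey
  exact ⟨y - x, hmA, hBdiff x hx y hy hxy⟩

section Main


variable {X : Type*} [AddCommGroup X] [Module ℂ X] [TopologicalSpace X]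
    [IsTopologicalAddGroup X] [ContinuousSMul ℂ X]

lemma directSumPowers_apply (T : X →L[ℂ] X) (r : ℕ) (x : Fin r → X) (i : Fin r) :
    directSumPowers T r x i = (T ^ ((i : ℕ) + 1)) (x i) := rfl

lemma directSumPowers_pow_apply (T : X →L[ℂ] X) (r n : ℕ) (x : Fin r → X) (i : Fin r) :
    ((directSumPowers T r) ^ n) x i = (T ^ (((i : ℕ) + 1) * n)) (x i) := by
  induction n generalizing x with
  | zero => simp
  | succ k ih =>
    have h1 : ((directSumPowers T r) ^ (k + 1)) x
        = ((directSumPowers T r) ^ k) (directSumPowers T r x) := by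
      rw [pow_succ, ContinuousLinearMap.mul_apply]
    rw [h1, ih, directSumPowers_apply, ← ContinuousLinearMap.mul_apply, ← pow_add,
      Nat.mul_succ]

end Main

/-- `T` is a Δ*-operator iff `T ⊕ T² ⊕ ⋯ ⊕ T^r` is a Δ*-operator on `X^r`. -/
theorem DeltaStarOperator_iff_directSum
    {X : Type*} [AddCommGroup X] [Module ℂ X] [TopologicalSpace X]
    [IsTopologicalAddGroup X] [ContinuousSMul ℂ X]
    (T : X →L[ℂ] X) (r : ℕ) (hr : 1 ≤ r) :
    DeltaStarOperator T ↔ DeltaStarOperator (directSumPowers T r) := by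
  constructor
  · intro hT U V hU hV hUne hVne
    obtain ⟨u, hu⟩ := hUne
    obtain ⟨v, hv⟩ := hVne
    obtain ⟨I, Us, hUs, hIU⟩ := (isOpen_pi_iff.mp hU) u hu
    obtain ⟨J, Vs, hVs, hJV⟩ := (isOpen_pi_iff.mp hV) v hv
    classical
    set U' : Fin r → Set X := fun i => if i ∈ I then Us i else Set.univ with hU'
    set V' : Fin r → Set X := fun i => if i ∈ J then Vs i else Set.univ with hV'
    have hU'open : ∀ i, IsOpen (U' i) := by
      intro i; rw [hU']; dsimp only; split
      · exact (hUs i (by assumption)).1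
      · exact isOpen_univ
    have hV'open : ∀ i, IsOpen (V' i) := by
      intro i; rw [hV']; dsimp only; split
      · exact (hVs i (by assumption)).1
      · exact isOpen_univ
    have hU'ne : ∀ i, (U' i).Nonempty := by
      intro i; refine ⟨u i, ?_⟩; rw [hU']; dsimp only; split
      · exact (hUs i (by assumption)).2
      · trivial
    have hV'ne : ∀ i, (V' i).Nonempty := by
      intro i; refine ⟨v i, ?_⟩; rw [hV']; dsimp only; split
      · exact (hVs i (by assumption)).2
      · trivial
    have hpiU : Set.pi Set.univ U' ⊆ U := by
      intro x hx
      apply hIU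
      intro i hi
      have := hx i (Set.mem_univ i)
      simp only [hU', Finset.mem_coe.mp hi, if_true] at this
      exact this
    have hpiV : Set.pi Set.univ V' ⊆ V := by
      intro x hx
      apply hJV
      intro i hi
      have := hx i (Set.mem_univ i)
      simp only [hV', Finset.mem_coe.mp hi, if_true] at this
      exact this
    have hAi : ∀ i : Fin r,
        DeltaStarSet {n : ℕ | ((T ^ (((i : ℕ) + 1) * n)) '' (U' i) ∩ (V' i)).Nonempty} := by
      intro i
      have h1 := hT (U' i) (V' i) (hU'open i) (hV'open i) (hU'ne i) (hV'ne i)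
      have h2 := deltaStar_dilate h1 (k := (i : ℕ) + 1) (Nat.succ_le_succ (Nat.zero_le _))
      exact h2
    have hinter := deltaStar_iInter_fin _ hAi
    apply deltaStar_mono _ hinter
    intro n hn
    simp only [Set.mem_iInter, Set.mem_setOf_eq] at hn
    have hx : ∀ i : Fin r, ∃ p, p ∈ U' i ∧ (T ^ (((i : ℕ) + 1) * n)) p ∈ V' i := by
      intro i
      obtain ⟨y, ⟨p, hp, rfl⟩, hyV⟩ := hn i
      exact ⟨p, hp, hyV⟩
    choose p hp1 hp2 using hx
    refine ⟨((directSumPowers T r) ^ n) p, ⟨p, ?_, rfl⟩, ?_⟩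
    · exact hpiU (fun i _ => hp1 i)
    · refine hpiV (fun i _ => ?_)
      rw [directSumPowers_pow_apply]
      exact hp2 i
  · intro hS U V hU hV hUne hVne
    obtain ⟨u, hu⟩ := hUne
    obtain ⟨v, hv⟩ := hVne
    set i0 : Fin r := ⟨0, hr⟩ with hi0
    have hSU := hS ((fun x : Fin r → X => x i0) ⁻¹' U) ((fun x : Fin r → X => x i0) ⁻¹' V)
      (hU.preimage (continuous_apply i0)) (hV.preimage (continuous_apply i0))
      ⟨fun _ => u, by simpa using hu⟩ ⟨fun _ => v, by simpa using hv⟩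
    apply deltaStar_mono _ hSU
    intro n hn
    obtain ⟨y, ⟨x, hxU, rfl⟩, hyV⟩ := hn
    refine ⟨(T ^ n) (x i0), ⟨x i0, hxU, rfl⟩, ?_⟩
    have := directSumPowers_pow_apply T r n x i0
    simp only [hi0] at this
    simp only [Set.mem_preimage] at hyV
    rw [show ((⟨0, hr⟩ : Fin r) : ℕ) + 1 = 1 by rfl, one_mul] at this
    rwa [this] at hyV
end

section
/- Let 1 ≤ p < ∞, let w : ℤ → ℂ be a bounded weight with w_k ≠ 0 for all k ∈ ℤ, and let B_w be the bilateral weighted backward shift on ℓ^p(ℤ, ℂ). Then for every integer r ≥ 1: B_w is an IP*-operator if and only if (B_w, B_w², …, B_w^r) is d-IP*, i.e. for all nonempty open sets U₀, U₁, …, U_r ⊆ ℓ^p(ℤ, ℂ) the set {k ∈ ℕ : B_w^{-k}(U₁) ∩ B_w^{-2k}(U₂) ∩ … ∩ B_w^{-rk}(U_r) ∩ U₀ ≠ ∅} is an IP* set. -/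
open Filter Set
open scoped ENNReal

/-- `A ⊆ ℕ` is an IP set: there is a sequence of positive integers all of whose
nonempty finite sums lie in `A`. -/
def IPSet (A : Set ℕ) : Prop :=
  ∃ x : ℕ → ℕ, (∀ n, 0 < x n) ∧
    ∀ F : Finset ℕ, F.Nonempty → (∑ n ∈ F, x n) ∈ A

/-- `A ⊆ ℕ` is an IP* set: it meets every IP set. -/
def IPStarSet (A : Set ℕ) : Prop :=
  ∀ B : Set ℕ, IPSet B → (A ∩ B).Nonempty

lemma IPStarSet.mono {A A' : Set ℕ} (h : A ⊆ A') (hA : IPStarSet A) : IPStarSet A' :=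
  fun B hB => ((hA B hB).imp fun _ hx => ⟨h hx.1, hx.2⟩)

lemma IPStarSet.univ : IPStarSet Set.univ := by
  intro B hB
  obtain ⟨x, hx, hs⟩ := hB
  exact ⟨x 0, trivial, by simpa using hs {0} ⟨0, by simp⟩⟩

/-- every element of `FS a` is a nonempty finite sum of terms of `a`. -/
lemma FS_eq_finsetSum {a : Stream' ℕ} {y : ℕ} (h : y ∈ Hindman.FS a) :
    ∃ F : Finset ℕ, F.Nonempty ∧ y = ∑ n ∈ F, a.get n := by
  induction h with
  | head' a => exact ⟨{0}, ⟨0, by simp⟩, by simp [Stream'.head]⟩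
  | tail' a m h ih =>
      obtain ⟨F, hF, rfl⟩ := ih
      refine ⟨F.map ⟨Nat.succ, Nat.succ_injective⟩, hF.map, ?_⟩
      rw [Finset.sum_map]
      rfl
  | cons' a m h ih =>
      obtain ⟨F, hF, rfl⟩ := ih
      refine ⟨insert 0 (F.map ⟨Nat.succ, Nat.succ_injective⟩), ⟨0, by simp⟩, ?_⟩
      rw [Finset.sum_insert (by simp), Finset.sum_map]
      rfl

lemma IPStarSet.inter {A A' : Set ℕ} (hA : IPStarSet A) (hA' : IPStarSet A') :
    IPStarSet (A ∩ A') := by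
  intro B hB
  obtain ⟨x, hxpos, hxsum⟩ := hB
  set a : Stream' ℕ := x with ha
  have hget : ∀ n, a.get n = x n := fun n => rfl
  have hFSsub : Hindman.FS a ⊆ B := by
    intro y hy
    obtain ⟨F, hF, rfl⟩ := FS_eq_finsetSum hy
    exact hxsum F hF
  have hFSpos : ∀ y ∈ Hindman.FS a, 0 < y := by
    intro y hy
    obtain ⟨F, hF, rfl⟩ := FS_eq_finsetSum hy
    exact Finset.sum_pos (fun i _ => hxpos i) hF
  have scov : Hindman.FS a ⊆ ⋃₀ {Hindman.FS a ∩ A, Hindman.FS a \ A} := by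
    intro y hy
    by_cases hyA : y ∈ A
    · exact ⟨_, Set.mem_insert _ _, hy, hyA⟩
    · exact ⟨_, Set.mem_insert_of_mem _ rfl, hy, hyA⟩
  obtain ⟨c, hc, b, hb⟩ := Hindman.FS_partition_regular a _
    ((Set.finite_singleton _).insert _) scov
  have hbFS : Hindman.FS b ⊆ Hindman.FS a := by
    rcases hc with rfl | rfl
    · exact hb.trans (Set.inter_subset_left)
    · exact hb.trans (Set.diff_subset)
  have hbpos : ∀ n, 0 < b.get n := fun n => hFSpos _ (hbFS (Hindman.FS.singleton b n))
  have hIPb : IPSet {y | ∃ F : Finset ℕ, F.Nonempty ∧ y = ∑ n ∈ F, b.get n} :=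
    ⟨b.get, hbpos, fun F hF => ⟨F, hF, rfl⟩⟩
  rcases hc with rfl | rfl
  · obtain ⟨t, htA', F, hF, rfl⟩ := hA' _ hIPb
    have htc : (∑ n ∈ F, b.get n) ∈ Hindman.FS a ∩ A := hb (Hindman.FS.finset_sum b F hF)
    exact ⟨_, ⟨htc.2, htA'⟩, hFSsub htc.1⟩
  · obtain ⟨t, htA, F, hF, rfl⟩ := hA _ hIPb
    have htc := hb (Hindman.FS.finset_sum b F hF)
    exact absurd htA htc.2

lemma IPStarSet.finsetInter {ι : Type*} [DecidableEq ι] (t : Finset ι) (f : ι → Set ℕ)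
    (h : ∀ i ∈ t, IPStarSet (f i)) : IPStarSet {k | ∀ i ∈ t, k ∈ f i} := by
  induction t using Finset.induction with
  | empty => simpa using IPStarSet.univ
  | @insert a t hat ih =>
      have : {k | ∀ i ∈ insert a t, k ∈ f i} = f a ∩ {k | ∀ i ∈ t, k ∈ f i} := by
        ext k; simp [Set.mem_inter_iff]
      rw [this]
      exact (h a (Finset.mem_insert_self a t)).inter
        (ih fun i hi => h i (Finset.mem_insert_of_mem hi))

lemma IPStarSet.mul_preimage {A : Set ℕ} (hA : IPStarSet A) {l : ℕ} (hl : 0 < l) :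
    IPStarSet {k | l * k ∈ A} := by
  intro B hB
  obtain ⟨x, hxpos, hxsum⟩ := hB
  have : IPSet {y | ∃ F : Finset ℕ, F.Nonempty ∧ y = ∑ n ∈ F, l * x n} :=
    ⟨fun n => l * x n, fun n => Nat.mul_pos hl (hxpos n), fun F hF => ⟨F, hF, rfl⟩⟩
  obtain ⟨t, htA, F, hF, rfl⟩ := hA _ this
  refine ⟨∑ n ∈ F, x n, ?_, hxsum F hF⟩
  simpa [Finset.mul_sum] using htA

noncomputable section

/-- products of weights: `Pw w n k = w k * w (k-1) * ⋯ * w (k-n+1)`. -/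
def Pw (w : ℤ → ℂ) : ℕ → ℤ → ℂ
  | 0, _ => 1
  | n + 1, k => w k * Pw w n (k - 1)

lemma Pw_ne_zero {w : ℤ → ℂ} (hw0 : ∀ k, w k ≠ 0) : ∀ (n : ℕ) (k : ℤ), Pw w n k ≠ 0
  | 0, _ => one_ne_zero
  | n + 1, k => mul_ne_zero (hw0 k) (Pw_ne_zero hw0 n (k - 1))

lemma Pw_add (w : ℤ → ℂ) : ∀ (a b : ℕ) (k : ℤ),
    Pw w (a + b) k = Pw w a k * Pw w b (k - a)
  | 0, b, k => by simp [Pw]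
  | a + 1, b, k => by
      have : a + 1 + b = (a + b) + 1 := by omega
      rw [this]
      show w k * Pw w (a + b) (k - 1) = (w k * Pw w a (k - 1)) * Pw w b (k - (a + 1 : ℕ))
      rw [Pw_add w a b (k - 1), mul_assoc]
      congr 2
      push_cast
      ring

variable (p : ℝ≥0∞) [Fact (1 ≤ p)]


lemma p_ne_zero : p ≠ 0 := (zero_lt_one.trans_le Fact.out).ne'

lemma p_toReal_pos (hp : p ≠ ∞) : 0 < p.toReal :=
  ENNReal.toReal_pos (p_ne_zero p) hp

/-- evaluation at a coordinate, as a continuous linear map. -/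
def coordL (i : ℤ) : lp (fun _ : ℤ => ℂ) p →L[ℂ] ℂ :=
  LinearMap.mkContinuous
    { toFun := fun f => f i
      map_add' := fun f g => congrFun (lp.coeFn_add f g) i
      map_smul' := fun c f => congrFun (lp.coeFn_smul c f) i }
    1 (fun f => by simpa using lp.norm_apply_le_norm (p_ne_zero p) f i)

@[simp] lemma coordL_apply (i : ℤ) (f : lp (fun _ : ℤ => ℂ) p) : coordL p i f = f i := rfl

/-- the canonical basis vector. -/
def eV (m : ℤ) : lp (fun _ : ℤ => ℂ) p := lp.single p m 1

lemma norm_em (hp : p ≠ ∞) (m : ℤ) : ‖eV p m‖ = 1 := by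
  simpa [eV] using lp.norm_single (E := fun _ : ℤ => ℂ) (pos_iff_ne_zero.mpr (p_ne_zero p)) m (1 : ℂ)

lemma single_eq_smul (m : ℤ) (c : ℂ) :
    (lp.single p m c : lp (fun _ : ℤ => ℂ) p) = c • eV p m := by
  rw [eV, ← lp.single_smul]
  norm_num

lemma em_apply_self (m : ℤ) : (eV p m : ∀ _ : ℤ, ℂ) m = 1 := lp.single_apply_self p m 1

lemma em_apply_ne {m j : ℤ} (h : j ≠ m) : (eV p m : ∀ _ : ℤ, ℂ) j = 0 :=
  lp.single_apply_ne p m 1 h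

variable {w : ℤ → ℂ} {B : lp (fun _ : ℤ => ℂ) p →L[ℂ] lp (fun _ : ℤ => ℂ) p}
variable (hB : ∀ k : ℤ, B (eV p k) = w k • eV p (k - 1))

include hB in
lemma Bpow_single (n : ℕ) (m : ℤ) :
    (B ^ n) (eV p m) = Pw w n m • eV p (m - n) := by
  induction n generalizing m with
  | zero => simp [Pw]
  | succ n ih =>
      rw [pow_succ, ContinuousLinearMap.mul_apply, hB m, map_smul, ih (m - 1)]
      rw [smul_smul]
      show (w m * Pw w n (m - 1)) • _ = Pw w (n + 1) m • _
      congr 2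
      push_cast
      ring

include hB in
lemma Bpow_smul_single (n : ℕ) (m : ℤ) (c : ℂ) :
    (B ^ n) (c • eV p m) = (c * Pw w n m) • eV p (m - n) := by
  rw [map_smul, Bpow_single p hB, smul_smul]

include hB in
lemma coord_Bpow (hp : p ≠ ∞) (u : lp (fun _ : ℤ => ℂ) p) (n : ℕ) (i : ℤ) :
    ((B ^ n) u : ∀ _ : ℤ, ℂ) i = Pw w n (i + n) * u (i + n) := by
  classical
  have h1 := lp.hasSum_single hp u
  have h2 := ContinuousLinearMap.hasSum ((coordL p i).comp (B ^ n)) h1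
  have h3 : (fun m : ℤ => ((coordL p i).comp (B ^ n)) (lp.single p m (u m))) =
      fun m : ℤ => if m = i + n then Pw w n (i + n) * u (i + n) else 0 := by
    funext m
    rw [ContinuousLinearMap.comp_apply, single_eq_smul, Bpow_smul_single p hB]
    by_cases hm : m = i + n
    · subst hm
      have hidx : (i + n : ℤ) - n = i := by ring
      rw [if_pos rfl, hidx, coordL_apply, lp.coeFn_smul]
      simp [em_apply_self, mul_comm]
    · have hidx : i ≠ m - n := fun h => hm (by omega)
      rw [if_neg hm, coordL_apply, lp.coeFn_smul]
      simp [em_apply_ne p hidx]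
  rw [h3] at h2
  exact h2.unique (hasSum_ite_eq (i + n) _)

lemma div_norm_le {a b : ℂ} {δ : ℝ} (hδ : 0 < δ) (hb : 1/δ ≤ ‖b‖) : ‖a / b‖ ≤ ‖a‖ * δ := by
  have hb0 : 0 < ‖b‖ := lt_of_lt_of_le (by positivity) hb
  rw [norm_div, div_le_iff₀ hb0]
  have h1 : 1 ≤ δ * ‖b‖ := by
    rw [div_le_iff₀ hδ] at hb
    linarith [mul_comm ‖b‖ δ]
  nlinarith [norm_nonneg a]

lemma norm_sum_smul_le (hp : p ≠ ∞) (F : Finset ℤ) (f : ℤ → ℂ) (g : ℤ → ℤ) :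
    ‖∑ m ∈ F, f m • eV p (g m)‖ ≤ ∑ m ∈ F, ‖f m‖ := by
  refine (norm_sum_le _ _).trans (Finset.sum_le_sum fun m _ => ?_)
  rw [norm_smul, norm_em p hp, mul_one]

/-- the IP*-operator hypothesis -/
def IPStarHyp {p : ℝ≥0∞} [Fact (1 ≤ p)] (B : lp (fun _ : ℤ => ℂ) p →L[ℂ] lp (fun _ : ℤ => ℂ) p) : Prop :=
  ∀ U V : Set (lp (fun _ : ℤ => ℂ) p),
    IsOpen U → IsOpen V → U.Nonempty → V.Nonempty →
    IPStarSet {n : ℕ | ((B ^ n) '' U ∩ V).Nonempty}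

include hB in
lemma smallPw (hp : p ≠ ∞) (hyp : IPStarHyp B) (m : ℤ) {δ : ℝ} (hδ : 0 < δ) :
    IPStarSet {n : ℕ | ‖Pw w n m‖ ≤ δ} := by
  have h := hyp (Metric.ball (eV p m) (1/2)) (Metric.ball 0 (δ/2))
    Metric.isOpen_ball Metric.isOpen_ball
    ⟨_, Metric.mem_ball_self (by norm_num)⟩ ⟨_, Metric.mem_ball_self (by linarith)⟩
  refine h.mono ?_
  rintro n ⟨v, ⟨u, hu, rfl⟩, hv⟩
  rw [Metric.mem_ball, dist_eq_norm] at hu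
  rw [Metric.mem_ball, dist_zero_right] at hv
  have hum : ‖u m - 1‖ < 1/2 := by
    have h1 := lp.norm_apply_le_norm (p_ne_zero p) (u - eV p m) m
    have h2 : (↑(u - eV p m) : ∀ _ : ℤ, ℂ) m = u m - 1 := by
      rw [lp.coeFn_sub, Pi.sub_apply, em_apply_self]
    rw [h2] at h1
    exact lt_of_le_of_lt h1 hu
  have humlb : (1:ℝ)/2 ≤ ‖u m‖ := by
    have h3 : ‖(1:ℂ)‖ ≤ ‖u m‖ + ‖u m - 1‖ := by
      calc ‖(1:ℂ)‖ = ‖u m - (u m - 1)‖ := by ring_nf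
        _ ≤ ‖u m‖ + ‖u m - 1‖ := norm_sub_le _ _
    rw [norm_one] at h3
    linarith
  have hcoord : (↑((B ^ n) u) : ∀ _ : ℤ, ℂ) (m - n) = Pw w n m * u m := by
    have e : m - (n:ℤ) + n = m := by ring
    rw [coord_Bpow p hB hp, e]
  have hnorm : ‖Pw w n m * u m‖ ≤ ‖(B ^ n) u‖ := by
    rw [← hcoord]
    exact lp.norm_apply_le_norm (p_ne_zero p) _ _
  rw [norm_mul] at hnorm
  have : ‖Pw w n m‖ * ‖u m‖ < δ/2 := lt_of_le_of_lt hnorm hv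
  have hPw : 0 ≤ ‖Pw w n m‖ := norm_nonneg _
  show ‖Pw w n m‖ ≤ δ
  nlinarith

include hB in
lemma largePw (hp : p ≠ ∞) (hyp : IPStarHyp B) (m : ℤ) {M : ℝ} (hM : 0 < M) :
    IPStarSet {n : ℕ | M ≤ ‖Pw w n (m + n)‖} := by
  have h := hyp (Metric.ball 0 (1/(2*M))) (Metric.ball (eV p m) (1/2))
    Metric.isOpen_ball Metric.isOpen_ball
    ⟨_, Metric.mem_ball_self (by positivity)⟩ ⟨_, Metric.mem_ball_self (by norm_num)⟩
  refine h.mono ?_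
  rintro n ⟨v, ⟨u, hu, rfl⟩, hv⟩
  rw [Metric.mem_ball, dist_zero_right] at hu
  rw [Metric.mem_ball, dist_eq_norm] at hv
  have hum : ‖(↑((B ^ n) u) : ∀ _ : ℤ, ℂ) m - 1‖ < 1/2 := by
    have h1 := lp.norm_apply_le_norm (p_ne_zero p) ((B ^ n) u - eV p m) m
    have h2 : (↑((B ^ n) u - eV p m) : ∀ _ : ℤ, ℂ) m
        = (↑((B ^ n) u) : ∀ _ : ℤ, ℂ) m - 1 := by
      rw [lp.coeFn_sub, Pi.sub_apply, em_apply_self]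
    rw [h2] at h1
    exact lt_of_le_of_lt h1 hv
  have hlb : (1:ℝ)/2 ≤ ‖(↑((B ^ n) u) : ∀ _ : ℤ, ℂ) m‖ := by
    set t := (↑((B ^ n) u) : ∀ _ : ℤ, ℂ) m
    have h3 : ‖(1:ℂ)‖ ≤ ‖t‖ + ‖t - 1‖ := by
      calc ‖(1:ℂ)‖ = ‖t - (t - 1)‖ := by ring_nf
        _ ≤ ‖t‖ + ‖t - 1‖ := norm_sub_le _ _
    rw [norm_one] at h3
    linarith
  rw [coord_Bpow p hB hp, norm_mul] at hlb
  have hub : ‖(↑u : ∀ _ : ℤ, ℂ) (m + n)‖ < 1/(2*M) :=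
    lt_of_le_of_lt (lp.norm_apply_le_norm (p_ne_zero p) u (m + n)) hu
  have h0 : 0 ≤ ‖(↑u : ∀ _ : ℤ, ℂ) (m + n)‖ := norm_nonneg _
  have hP0 : 0 ≤ ‖Pw w n (m + n)‖ := norm_nonneg _
  show M ≤ ‖Pw w n (m + n)‖
  by_contra hcon
  push_neg at hcon
  have hc1 : ‖Pw w n (m + ↑n)‖ * ‖(↑u : ∀ _ : ℤ, ℂ) (m + ↑n)‖ < M * (1/(2*M)) := by
    calc ‖Pw w n (m + ↑n)‖ * ‖(↑u : ∀ _ : ℤ, ℂ) (m + ↑n)‖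
        ≤ M * ‖(↑u : ∀ _ : ℤ, ℂ) (m + ↑n)‖ := mul_le_mul_of_nonneg_right hcon.le h0
      _ < M * (1/(2*M)) := by
          apply mul_lt_mul_of_pos_left hub hM
  have hc2 : M * (1/(2*M)) = 1/2 := by field_simp
  rw [hc2] at hc1
  linarith

lemma approx_lemma (hp : p ≠ ∞) {U : Set (lp (fun _ : ℤ => ℂ) p)}
    (hU : IsOpen U) (hUne : U.Nonempty) :
    ∃ (F : Finset ℤ) (c : ℤ → ℂ) (ε : ℝ), 0 < ε ∧
      Metric.ball (∑ m ∈ F, c m • eV p m) ε ⊆ U := by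
  classical
  obtain ⟨y, hy⟩ := hUne
  obtain ⟨ε₀, hε₀, hball⟩ := Metric.isOpen_iff.mp hU y hy
  have h1 : Tendsto (fun s : Finset ℤ => ∑ m ∈ s, lp.single p m (y m)) atTop (nhds y) :=
    lp.hasSum_single hp y
  obtain ⟨F, hF⟩ := (Metric.tendsto_atTop.mp h1) (ε₀/2) (by linarith)
  refine ⟨F, fun m => y m, ε₀/2, by linarith, ?_⟩
  have hFc : (∑ m ∈ F, (fun m => (y m : ℂ)) m • eV p m) = ∑ m ∈ F, lp.single p m (y m) := by
    refine Finset.sum_congr rfl fun m _ => ?_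
    rw [single_eq_smul]
  intro zz hzz
  rw [Metric.mem_ball, hFc] at hzz
  apply hball
  rw [Metric.mem_ball]
  calc dist zz y ≤ dist zz (∑ m ∈ F, lp.single p m (y m))
        + dist (∑ m ∈ F, lp.single p m (y m)) y := dist_triangle _ _ _
    _ < ε₀/2 + ε₀/2 := add_lt_add hzz (hF F le_rfl)
    _ = ε₀ := by ring

end
set_option maxHeartbeats 2000000 in
/-- For a bilateral weighted backward shift `B_w` on `ℓ^p(ℤ, ℂ)` (`1 ≤ p < ∞`) and any
`r ≥ 1`: `B_w` is an IP*-operator iff `(B_w, B_w², …, B_w^r)` is d-IP*. -/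
theorem bilateralShift_IPStar_iff_dIPStar
    (p : ℝ≥0∞) [Fact (1 ≤ p)] (hp : p ≠ ∞)
    (w : ℤ → ℂ) (hwb : ∃ c : ℝ, ∀ k : ℤ, ‖w k‖ ≤ c) (hw0 : ∀ k : ℤ, w k ≠ 0)
    (B : lp (fun _ : ℤ => ℂ) p →L[ℂ] lp (fun _ : ℤ => ℂ) p)
    (hB : ∀ k : ℤ, B (lp.single p k 1) = w k • lp.single p (k - 1) 1)
    (r : ℕ) (hr : 1 ≤ r) :
    (∀ U V : Set (lp (fun _ : ℤ => ℂ) p),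
        IsOpen U → IsOpen V → U.Nonempty → V.Nonempty →
        IPStarSet {n : ℕ | ((B ^ n) '' U ∩ V).Nonempty}) ↔
    (∀ (U₀ : Set (lp (fun _ : ℤ => ℂ) p)) (U : Fin r → Set (lp (fun _ : ℤ => ℂ) p)),
        IsOpen U₀ → U₀.Nonempty → (∀ i, IsOpen (U i)) → (∀ i, (U i).Nonempty) →
        IPStarSet {k : ℕ |
          ((⋂ i : Fin r, (B ^ (((i : ℕ) + 1) * k)) ⁻¹' U i) ∩ U₀).Nonempty}) := by
  classical
  have hBe : ∀ k : ℤ, B (eV p k) = w k • eV p (k - 1) := hB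
  constructor
  · -- forward direction
    intro hyp U₀ U hU₀o hU₀ne hUo hUne
    have hyp' : IPStarHyp B := hyp
    obtain ⟨F₀, c₀, ε₀, hε₀, hball₀⟩ := approx_lemma p hp hU₀o hU₀ne
    choose F c ε hε hball using fun i : Fin r => approx_lemma p hp (hUo i) (hUne i)
    set V₀ : lp (fun _ : ℤ => ℂ) p := ∑ m ∈ F₀, c₀ m • eV p m with hV₀
    set Vv : Fin r → lp (fun _ : ℤ => ℂ) p :=
      fun i => ∑ m ∈ F i, c i m • eV p m with hVv
    clear_value V₀ Vv
    set S₀ : ℝ := ∑ m ∈ F₀, ‖c₀ m‖ with hS₀def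
    set S : Fin r → ℝ := fun i => ∑ m ∈ F i, ‖c i m‖ with hSdef
    have hS₀nn : 0 ≤ S₀ := Finset.sum_nonneg fun _ _ => norm_nonneg _
    have hSnn : ∀ i, 0 ≤ S i := fun i => Finset.sum_nonneg fun _ _ => norm_nonneg _
    have hSsum : 0 ≤ ∑ i, S i := Finset.sum_nonneg fun i _ => hSnn i
    set C : ℝ := 1 + S₀ + ∑ i, S i with hCdef
    have hCpos : 0 < C := by rw [hCdef]; linarith
    have hSC : S₀ + ∑ i, S i ≤ C := by rw [hCdef]; linarith
    haveI hne : Nonempty (Fin r) := ⟨⟨0, hr⟩⟩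
    set εm : ℝ := min ε₀ (Finset.univ.inf' Finset.univ_nonempty ε) with hεmdef
    have hεmpos : 0 < εm :=
      lt_min hε₀ ((Finset.lt_inf'_iff _).mpr fun i _ => hε i)
    have hεm₀ : εm ≤ ε₀ := min_le_left _ _
    have hεmi : ∀ i, εm ≤ ε i := fun i =>
      (min_le_right _ _).trans (Finset.inf'_le _ (Finset.mem_univ i))
    set δ : ℝ := εm / (4 * C) with hδdef
    have hδpos : 0 < δ := by
      rw [hδdef]; exact div_pos hεmpos (by linarith)
    have habs : ∀ a b : ℝ, 0 < b → b * (a / (4 * b)) = a / 4 := by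
      intro a b hb; field_simp
    have hCδ : C * δ = εm / 4 := by rw [hδdef]; exact habs εm C hCpos
    set Fall : Finset ℤ := F₀ ∪ Finset.univ.biUnion F with hFall
    have hF₀sub : ∀ m ∈ F₀, m ∈ Fall := fun m hm =>
      Finset.mem_union_left _ hm
    have hFsub : ∀ (i : Fin r), ∀ m ∈ F i, m ∈ Fall := fun i m hm =>
      Finset.mem_union_right _ (Finset.mem_biUnion.mpr ⟨i, Finset.mem_univ i, hm⟩)
    clear_value S₀ S C εm δ Fall
    have hGood : IPStarSet {k : ℕ | ∀ q ∈ (Finset.Icc 1 r) ×ˢ Fall,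
        k ∈ {k' : ℕ | 1/δ ≤ ‖Pw w (q.1 * k') (q.2 + (q.1 * k' : ℕ))‖ ∧
          ‖Pw w (q.1 * k') q.2‖ ≤ δ}} := by
      apply IPStarSet.finsetInter
      rintro ⟨l, m⟩ hlm
      rw [Finset.mem_product, Finset.mem_Icc] at hlm
      have hl : 0 < l := hlm.1.1
      have h1 : IPStarSet {n : ℕ | 1/δ ≤ ‖Pw w n (m + n)‖} :=
        largePw p hBe hp hyp' m (by positivity)
      have h2 : IPStarSet {n : ℕ | ‖Pw w n m‖ ≤ δ} := smallPw p hBe hp hyp' m hδpos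
      exact ((h1.inter h2).mul_preimage hl).mono fun k hk => hk
    refine hGood.mono ?_
    intro k hk
    simp only [Set.mem_setOf_eq] at hk
    have hkey : ∀ l : ℕ, 1 ≤ l → l ≤ r → ∀ m ∈ Fall,
        1/δ ≤ ‖Pw w (l * k) (m + (l * k : ℕ))‖ ∧ ‖Pw w (l * k) m‖ ≤ δ := by
      intro l h1 h2 m hm
      exact hk (l, m) (by rw [Finset.mem_product, Finset.mem_Icc]; exact ⟨⟨h1, h2⟩, hm⟩)
    set nn : Fin r → ℕ := fun i => ((i : ℕ) + 1) * k with hnn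
    have hn1 : ∀ i : Fin r, 1 ≤ (i : ℕ) + 1 := fun i => Nat.succ_le_succ (Nat.zero_le _)
    have hnle : ∀ i : Fin r, (i : ℕ) + 1 ≤ r := fun i => i.2
    set z : Fin r → lp (fun _ : ℤ => ℂ) p := fun i =>
      ∑ m ∈ F i, (c i m / Pw w (nn i) (m + (nn i : ℕ))) • eV p (m + (nn i : ℕ)) with hz
    set x : lp (fun _ : ℤ => ℂ) p := V₀ + ∑ i, z i with hx
    -- norm of z i
    have hzi : ∀ i, ‖z i‖ ≤ S i * δ := by
      intro i
      rw [hz]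
      refine (norm_sum_le _ _).trans ?_
      have hb : ∀ m ∈ F i,
          ‖(c i m / Pw w (nn i) (m + (nn i : ℕ))) • eV p (m + (nn i : ℕ))‖
            ≤ ‖c i m‖ * δ := by
        intro m hm
        rw [norm_smul, norm_em p hp, mul_one]
        exact div_norm_le hδpos
          (hkey ((i : ℕ) + 1) (hn1 i) (hnle i) m (hFsub i m hm)).1
      calc ∑ m ∈ F i, ‖(c i m / Pw w (nn i) (m + (nn i : ℕ))) • eV p (m + (nn i : ℕ))‖
          ≤ ∑ m ∈ F i, ‖c i m‖ * δ := Finset.sum_le_sum hb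
        _ = S i * δ := by simp only [hSdef]; rw [Finset.sum_mul]
    -- B^{nn j} V₀
    have hBV₀ : ∀ j : Fin r, ‖(B ^ nn j) V₀‖ ≤ S₀ * δ := by
      intro j
      have he : (B ^ nn j) V₀ = ∑ m ∈ F₀, (c₀ m * Pw w (nn j) m) • eV p (m - nn j) := by
        rw [hV₀, map_sum]
        exact Finset.sum_congr rfl fun m _ => Bpow_smul_single p hBe _ _ _
      rw [he]
      refine (norm_sum_le _ _).trans ?_
      have hb : ∀ m ∈ F₀, ‖(c₀ m * Pw w (nn j) m) • eV p (m - nn j)‖ ≤ ‖c₀ m‖ * δ := by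
        intro m hm
        rw [norm_smul, norm_em p hp, mul_one, norm_mul]
        exact mul_le_mul_of_nonneg_left
          (hkey ((j : ℕ) + 1) (hn1 j) (hnle j) m (hF₀sub m hm)).2 (norm_nonneg _)
      calc ∑ m ∈ F₀, ‖(c₀ m * Pw w (nn j) m) • eV p (m - nn j)‖
          ≤ ∑ m ∈ F₀, ‖c₀ m‖ * δ := Finset.sum_le_sum hb
        _ = S₀ * δ := by rw [hS₀def, Finset.sum_mul]
    -- B^{nn j} z j = Vv j
    have hBzj : ∀ j : Fin r, (B ^ nn j) (z j) = Vv j := by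
      intro j
      rw [hz, hVv, map_sum]
      refine Finset.sum_congr rfl fun m _ => ?_
      rw [Bpow_smul_single p hBe, div_mul_cancel₀ _ (Pw_ne_zero hw0 _ _),
        add_sub_cancel_right]
    -- cross terms
    have hBzij : ∀ j i : Fin r, i ≠ j → ‖(B ^ nn j) (z i)‖ ≤ S i * δ := by
      intro j i hij
      have he : (B ^ nn j) (z i) = ∑ m ∈ F i,
          ((c i m / Pw w (nn i) (m + (nn i : ℕ))) * Pw w (nn j) (m + (nn i : ℕ)))
            • eV p ((m + (nn i : ℕ)) - nn j) := by
        rw [hz, map_sum]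
        exact Finset.sum_congr rfl fun m _ => Bpow_smul_single p hBe _ _ _
      have hterm : ∀ m ∈ F i,
          ‖(c i m / Pw w (nn i) (m + (nn i : ℕ))) * Pw w (nn j) (m + (nn i : ℕ))‖
            ≤ ‖c i m‖ * δ := by
        intro m hm
        rcases lt_or_gt_of_ne (fun hc => hij (Fin.ext hc)) with hlt | hgt
        · -- (i : ℕ) < (j : ℕ) : coefficient = c i m * Pw w (l*k) m
          set l : ℕ := (j : ℕ) - (i : ℕ) with hldef
          have hl1 : 1 ≤ l := by omega
          have hlr : l ≤ r := by have := hnle j; omega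
          have hsplit : nn j = nn i + l * k := by
            show ((j : ℕ) + 1) * k = ((i : ℕ) + 1) * k + l * k
            rw [← add_mul]
            congr 1
            omega
          have hPs : Pw w (nn j) (m + (nn i : ℕ)) =
              Pw w (nn i) (m + (nn i : ℕ)) * Pw w (l * k) m := by
            rw [hsplit, Pw_add]
            congr 2
            push_cast
            ring
          have hcoef : (c i m / Pw w (nn i) (m + (nn i : ℕ))) * Pw w (nn j) (m + (nn i : ℕ))
              = c i m * Pw w (l * k) m := by
            rw [hPs]
            field_simp [Pw_ne_zero hw0]
          rw [hcoef, norm_mul]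
          exact mul_le_mul_of_nonneg_left
            (hkey l hl1 hlr m (hFsub i m hm)).2 (norm_nonneg _)
        · -- (j : ℕ) < (i : ℕ) : coefficient = c i m / Pw w (l*k) (m + l*k)
          set l : ℕ := (i : ℕ) - (j : ℕ) with hldef
          have hl1 : 1 ≤ l := by omega
          have hlr : l ≤ r := by have := hnle i; omega
          have hsplit : nn i = nn j + l * k := by
            show ((i : ℕ) + 1) * k = ((j : ℕ) + 1) * k + l * k
            rw [← add_mul]
            congr 1
            omega
          have hPs : Pw w (nn i) (m + (nn i : ℕ)) =
              Pw w (nn j) (m + (nn i : ℕ)) * Pw w (l * k) (m + (l * k : ℕ)) := by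
            rw [hsplit, Pw_add]
            congr 2
            push_cast
            ring
          have hcoef : (c i m / Pw w (nn i) (m + (nn i : ℕ))) * Pw w (nn j) (m + (nn i : ℕ))
              = c i m / Pw w (l * k) (m + (l * k : ℕ)) := by
            rw [hPs]
            field_simp [Pw_ne_zero hw0]
          rw [hcoef]
          exact div_norm_le hδpos (hkey l hl1 hlr m (hFsub i m hm)).1
      rw [he]
      refine (norm_sum_le _ _).trans ?_
      have hb : ∀ m ∈ F i,
          ‖((c i m / Pw w (nn i) (m + (nn i : ℕ))) * Pw w (nn j) (m + (nn i : ℕ)))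
            • eV p ((m + (nn i : ℕ)) - nn j)‖ ≤ ‖c i m‖ * δ := by
        intro m hm
        rw [norm_smul, norm_em p hp, mul_one]
        exact hterm m hm
      calc (∑ m ∈ F i, ‖((c i m / Pw w (nn i) (m + (nn i : ℕ)))
              * Pw w (nn j) (m + (nn i : ℕ))) • eV p ((m + (nn i : ℕ)) - nn j)‖)
          ≤ ∑ m ∈ F i, ‖c i m‖ * δ := Finset.sum_le_sum hb
        _ = S i * δ := by simp only [hSdef]; rw [Finset.sum_mul]
    -- x ∈ U₀
    have hxU₀ : x ∈ U₀ := by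
      apply hball₀
      rw [Metric.mem_ball, dist_eq_norm]
      have hd : x - V₀ = ∑ i, z i := by rw [hx]; exact add_sub_cancel_left _ _
      have hlt : ‖x - V₀‖ < εm := by
        rw [hd]
        calc ‖∑ i, z i‖ ≤ ∑ i, ‖z i‖ := norm_sum_le _ _
          _ ≤ ∑ i, S i * δ := Finset.sum_le_sum fun i _ => hzi i
          _ = (∑ i, S i) * δ := by rw [Finset.sum_mul]
          _ ≤ C * δ := mul_le_mul_of_nonneg_right (by linarith) hδpos.le
          _ = εm / 4 := hCδ
          _ < εm := by linarith
      exact lt_of_lt_of_le hlt hεm₀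
    -- B^{nn j} x ∈ U j
    have hxUj : ∀ j : Fin r, (B ^ nn j) x ∈ U j := by
      intro j
      apply hball j
      rw [Metric.mem_ball, dist_eq_norm,
        show (∑ m ∈ F j, c j m • eV p m) = Vv j from (by rw [hVv])]
      have hsum : (B ^ nn j) x = (B ^ nn j) V₀ + ∑ i, (B ^ nn j) (z i) := by
        rw [hx, map_add, map_sum]
      have hsplit2 : ∑ i, (B ^ nn j) (z i)
          = Vv j + ∑ i ∈ Finset.univ.erase j, (B ^ nn j) (z i) := by
        rw [← Finset.add_sum_erase _ _ (Finset.mem_univ j), hBzj j]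
      have hd : (B ^ nn j) x - Vv j
          = (B ^ nn j) V₀ + ∑ i ∈ Finset.univ.erase j, (B ^ nn j) (z i) := by
        rw [hsum, hsplit2]; abel
      have hlt : ‖(B ^ nn j) x - Vv j‖ < εm := by
        rw [hd]
        have herase : ∑ i ∈ Finset.univ.erase j, ‖(B ^ nn j) (z i)‖
            ≤ ∑ i ∈ Finset.univ.erase j, S i * δ :=
          Finset.sum_le_sum fun i hi => hBzij j i (Finset.ne_of_mem_erase hi)
        have herase2 : ∑ i ∈ Finset.univ.erase j, S i * δ ≤ ∑ i, S i * δ :=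
          Finset.sum_le_sum_of_subset_of_nonneg (Finset.subset_univ _)
            (fun i _ _ => mul_nonneg (hSnn i) hδpos.le)
        calc ‖(B ^ nn j) V₀ + ∑ i ∈ Finset.univ.erase j, (B ^ nn j) (z i)‖
            ≤ ‖(B ^ nn j) V₀‖ + ‖∑ i ∈ Finset.univ.erase j, (B ^ nn j) (z i)‖ :=
              norm_add_le _ _
          _ ≤ S₀ * δ + ∑ i ∈ Finset.univ.erase j, ‖(B ^ nn j) (z i)‖ :=
              add_le_add (hBV₀ j) (norm_sum_le _ _)
          _ ≤ S₀ * δ + ∑ i, S i * δ := by linarith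
          _ = (S₀ + ∑ i, S i) * δ := by rw [← Finset.sum_mul]; ring
          _ ≤ C * δ := mul_le_mul_of_nonneg_right hSC hδpos.le
          _ = εm / 4 := hCδ
          _ < εm := by linarith
      exact lt_of_lt_of_le hlt (hεmi j)
    exact ⟨x, Set.mem_inter (Set.mem_iInter.mpr fun i => hxUj i) hxU₀⟩
  · -- reverse direction
    intro hyp Uo V hUo hVo hUne hVne
    have h := hyp Uo (fun _ => V) hUo hUne (fun _ => hVo) (fun _ => hVne)
    refine h.mono ?_
    rintro k ⟨y, hyI, hyU⟩
    have h0 := Set.mem_iInter.mp hyI ⟨0, hr⟩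
    refine ⟨(B ^ k) y, ⟨y, hyU, rfl⟩, ?_⟩
    simpa using h0
end
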